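/- For s ∈ ℝ with 2s ∉ ℤ, define θ_i^{(s)} = (1/i!)·∏_{k=0}^{i-1}(s-k)/(2s-k) for i ≥ 1 and θ_0^{(s)} = 1, and define for positive integers i ≤ j with i ≡ j (mod 2): ν_{2i,2j}^{(s)} = 2√(4i-1) · [(s+1/2-j)_i (-j)_i / ((j-s)_i (1/2+j)_i)] · θ_{2j}^{(s)} and ν_{2i-1,2j-1}^{(s)} = 2√(4i-3) · [(s+3/2-j)_{i-1} (1-j)_{i-1} / ((j-s)_{i-1} (1/2+j)_{i-1})] · θ_{2j-1}^{(s)}. Then for all positive integers i, p, q: ν_{2i-1,2p-1}^{(s)} ν_{2i-1,2q+1}^{(s)} + ν_{2i,2p}^{(s)} ν_{2i,2q}^{(s)} = 2 θ_{2p-1}^{(s)} θ_{2q}^{(s)} φ̃_{i-1}(s;p,q), where φ̃_n(s;p,q) = φ_n(s;p,q)·[(4n+3)(1+s-2p)(q-n)(1+2s+2n-2q) + (4n+1)(s-2q)(1+2p+2n)(s-p-n)]/[(s-p)(1+2p)(s-q)(1+2q)] and φ_n(s;p,q) = (s+3/2-p)_n(1-p)_n(s+1/2-q)_n(-q)_n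 / [(p-s+1)_n(p+3/2)_n(q-s+1)_n(q+3/2)_n]. -/

import Mathlib

/-- The rising factorial (Pochhammer symbol) `(x)_n = x (x+1) ⋯ (x+n-1)`. -/
noncomputable def risingFactorial (x : ℝ) (n : ℕ) : ℝ :=
  ∏ k ∈ Finset.range n, (x + k)

/-- `φ_n(s;p,q)`. -/
noncomputable def varphi (s : ℝ) (p q : ℕ) (n : ℕ) : ℝ :=
  (risingFactorial (s + 3 / 2 - p) n * risingFactorial (1 - p) n *
      risingFactorial (s + 1 / 2 - q) n * risingFactorial (-q) n) /
    (risingFactorial ((p : ℝ) - s + 1) n * risingFactorial ((p : ℝ) + 3 / 2) n *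
      risingFactorial ((q : ℝ) - s + 1) n * risingFactorial ((q : ℝ) + 3 / 2) n)

/-- `Φ_n(s;p,q)`. -/
noncomputable def Phi (s : ℝ) (p q : ℕ) (n : ℕ) : ℝ :=
  (((n : ℝ) + p - s) * (1 + 2 * p + 2 * n) * ((n : ℝ) + q - s) * (1 + 2 * q + 2 * n) /
      ((s - p) * (1 + 2 * p) * (s - q) * (1 + 2 * q))) * varphi s p q n

/-- `φ̃_n(s;p,q)` (denoted `ϕ_n` in the paper). -/
noncomputable def phiT (s : ℝ) (p q : ℕ) (n : ℕ) : ℝ :=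
  varphi s p q n *
    ((4 * (n : ℝ) + 3) * (1 + s - 2 * p) * ((q : ℝ) - n) * (1 + 2 * s + 2 * n - 2 * q) +
      (4 * (n : ℝ) + 1) * (s - 2 * q) * (1 + 2 * p + 2 * n) * (s - p - n)) /
    ((s - p) * (1 + 2 * p) * (s - q) * (1 + 2 * q))

/-- `θ_i^{(s)} = (1/i!) ∏_{k=0}^{i-1} (s-k)/(2s-k)`, with `θ_0^{(s)} = 1`. -/
noncomputable def theta (s : ℝ) (i : ℕ) : ℝ :=
  (1 / (Nat.factorial i : ℝ)) * ∏ k ∈ Finset.range i, (s - k) / (2 * s - k)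

/-- `ν_{2i,2j}^{(s)} = 2√(4i-1) (s+1/2-j)_i (-j)_i / ((j-s)_i (1/2+j)_i) θ_{2j}^{(s)}`. -/
noncomputable def nuEven (s : ℝ) (i j : ℕ) : ℝ :=
  2 * Real.sqrt (4 * (i : ℝ) - 1) *
    (risingFactorial (s + 1 / 2 - j) i * risingFactorial (-(j : ℝ)) i /
      (risingFactorial ((j : ℝ) - s) i * risingFactorial (1 / 2 + j) i)) *
    theta s (2 * j)

/-- `ν_{2i-1,2j-1}^{(s)} = 2√(4i-3) (s+3/2-j)_{i-1} (1-j)_{i-1} / ((j-s)_{i-1} (1/2+j)_{i-1}) θ_{2j-1}^{(s)}`. -/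
noncomputable def nuOdd (s : ℝ) (i j : ℕ) : ℝ :=
  2 * Real.sqrt (4 * (i : ℝ) - 3) *
    (risingFactorial (s + 3 / 2 - j) (i - 1) * risingFactorial (1 - (j : ℝ)) (i - 1) /
      (risingFactorial ((j : ℝ) - s) (i - 1) * risingFactorial (1 / 2 + j) (i - 1))) *
    theta s (2 * j - 1)

/-! After writing `i = n + 1`, each of the two products of `ν`'s is `θ_{2p-1} θ_{2q} φ_n(s;p,q)`
times a rational function of `s, p, q, n`: the Pochhammer symbols in `ν` differ from those in
`φ_n` only by a unit shift of the argument or of the length, and `θ_{2p}`, `θ_{2q+1}` are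
`θ_{2p-1}`, `θ_{2q}` times one more factor of the product defining `θ`. The two rational
functions add up to the one defining `φ̃_n`. -/

open Finset

lemma risingFactorial_succ (x : ℝ) (n : ℕ) :
    risingFactorial x (n + 1) = risingFactorial x n * (x + n) :=
  prod_range_succ _ n

lemma risingFactorial_succ' (x : ℝ) (n : ℕ) :
    risingFactorial x (n + 1) = x * risingFactorial (x + 1) n := by
  simp only [risingFactorial, prod_range_succ', Nat.cast_add, Nat.cast_one, Nat.cast_zero,
    add_zero, mul_comm x, add_assoc, add_comm (1 : ℝ)]

lemma risingFactorial_eq_mul_div {x : ℝ} {n : ℕ} (h : x + n ≠ 0) :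
    risingFactorial x n = x * risingFactorial (x + 1) n / (x + n) := by
  rw [eq_div_iff h, ← risingFactorial_succ, risingFactorial_succ']

lemma theta_succ (s : ℝ) (m : ℕ) :
    theta s (m + 1) = theta s m * ((s - m) / ((m + 1) * (2 * s - m))) := by
  rw [theta, theta, prod_range_succ, Nat.factorial_succ]
  push_cast
  simp only [div_eq_mul_inv, mul_inv]
  ring

lemma theta_two_mul_add_one (s : ℝ) (q : ℕ) :
    theta s (2 * q + 1) = theta s (2 * q) * ((s - 2 * q) / ((2 * q + 1) * (2 * s - 2 * q))) := by
  exact_mod_cast theta_succ s (2 * q)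

lemma theta_two_mul (s : ℝ) {p : ℕ} (hp : p ≠ 0) :
    theta s (2 * p) =
      theta s (2 * p - 1) * ((s - 2 * p + 1) / (2 * p * (2 * s - 2 * p + 1))) := by
  obtain ⟨P, rfl⟩ := Nat.exists_eq_add_one_of_ne_zero hp
  rw [show 2 * (P + 1) = 2 * P + 1 + 1 by ring, theta_succ, Nat.add_sub_cancel]
  push_cast
  ring

lemma nuOdd_mul_nuOdd_eq_varphi {s : ℝ} {n p : ℕ} (q : ℕ) (h : s ≠ p + n) :
    nuOdd s (n + 1) p * nuOdd s (n + 1) (q + 1) =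
      4 * (4 * n + 1) * theta s (2 * p - 1) * theta s (2 * q + 1) * varphi s p q n *
        ((p - s + n) * (p + 1 / 2 + n) / ((p - s) * (p + 1 / 2))) := by
  simp only [nuOdd, varphi, Nat.add_sub_cancel, show 2 * (q + 1) - 1 = 2 * q + 1 by omega]
  rw [risingFactorial_eq_mul_div (x := (p : ℝ) - s) (by contrapose! h; linarith),
    risingFactorial_eq_mul_div (x := 1 / 2 + (p : ℝ)) (by positivity)]
  push_cast
  simp only [div_eq_mul_inv, mul_inv, inv_inv]
  ring_nf
  rw [Real.sq_sqrt (by positivity)]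
  ring

lemma nuEven_mul_nuEven_eq_varphi (s : ℝ) (n p q : ℕ) :
    nuEven s (n + 1) p * nuEven s (n + 1) q =
      4 * (4 * n + 3) * theta s (2 * p) * theta s (2 * q) * varphi s p q n *
        ((s + 1 / 2 - p) * (-p) / ((p - s) * (p + 1 / 2))) *
        ((s + 1 / 2 - q + n) * (n - q) / ((q - s) * (q + 1 / 2))) := by
  simp only [nuEven, varphi]
  rw [risingFactorial_succ' (s + 1 / 2 - p), risingFactorial_succ' (-(p : ℝ)),
    risingFactorial_succ' ((p : ℝ) - s), risingFactorial_succ' (1 / 2 + (p : ℝ)),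
    risingFactorial_succ (s + 1 / 2 - q), risingFactorial_succ (-(q : ℝ)),
    risingFactorial_succ' ((q : ℝ) - s), risingFactorial_succ' (1 / 2 + (q : ℝ))]
  push_cast
  simp only [div_eq_mul_inv, mul_inv]
  ring_nf
  rw [Real.sq_sqrt (by positivity)]
  ring

lemma nuOdd_mul_nuOdd {s : ℝ} {n p q : ℕ} (hsp : s ≠ p) (hsq : s ≠ q) (hspn : s ≠ p + n) :
    nuOdd s (n + 1) p * nuOdd s (n + 1) (q + 1) =
      2 * (4 * n + 1) * theta s (2 * p - 1) * theta s (2 * q) * varphi s p q n *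
        ((s - 2 * q) * (1 + 2 * p + 2 * n) * (s - p - n) /
          ((s - p) * (1 + 2 * p) * (s - q) * (1 + 2 * q))) := by
  have hsp : s - p ≠ 0 := sub_ne_zero.mpr hsp
  have hsq : s - q ≠ 0 := sub_ne_zero.mpr hsq
  have hps : (p : ℝ) - s ≠ 0 := fun h => hsp (by linarith)
  have hsq' : 2 * s - 2 * q ≠ 0 := fun h => hsq (by linarith)
  have hcoeff : (s - 2 * q) / ((2 * q + 1) * (2 * s - 2 * q)) *
        ((p - s + n) * (p + 1 / 2 + n) / ((p - s) * (p + 1 / 2))) =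
      (s - 2 * q) * (1 + 2 * p + 2 * n) * (s - p - n) /
        ((s - p) * (1 + 2 * p) * (s - q) * (1 + 2 * q)) / 2 := by
    field_simp
    ring
  rw [nuOdd_mul_nuOdd_eq_varphi q hspn, theta_two_mul_add_one]
  linear_combination
    4 * (4 * n + 1) * theta s (2 * p - 1) * theta s (2 * q) * varphi s p q n * hcoeff

lemma nuEven_mul_nuEven {s : ℝ} {n p q : ℕ} (hp : p ≠ 0) (hsp : s ≠ p) (hsq : s ≠ q)
    (hsp' : 2 * s - 2 * p + 1 ≠ 0) :
    nuEven s (n + 1) p * nuEven s (n + 1) q =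
      2 * (4 * n + 3) * theta s (2 * p - 1) * theta s (2 * q) * varphi s p q n *
        ((1 + s - 2 * p) * (q - n) * (1 + 2 * s + 2 * n - 2 * q) /
          ((s - p) * (1 + 2 * p) * (s - q) * (1 + 2 * q))) := by
  have hp' : (p : ℝ) ≠ 0 := mod_cast hp
  have hsp : s - p ≠ 0 := sub_ne_zero.mpr hsp
  have hsq : s - q ≠ 0 := sub_ne_zero.mpr hsq
  have hps : (p : ℝ) - s ≠ 0 := fun h => hsp (by linarith)
  have hqs : (q : ℝ) - s ≠ 0 := fun h => hsq (by linarith)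
  have hcoeff : (s - 2 * p + 1) / (2 * p * (2 * s - 2 * p + 1)) *
        ((s + 1 / 2 - p) * (-p) / ((p - s) * (p + 1 / 2))) *
        ((s + 1 / 2 - q + n) * (n - q) / ((q - s) * (q + 1 / 2))) =
      (1 + s - 2 * p) * (q - n) * (1 + 2 * s + 2 * n - 2 * q) /
        ((s - p) * (1 + 2 * p) * (s - q) * (1 + 2 * q)) / 2 := by
    rw [div_mul_div_comm, div_mul_div_comm, div_div, div_eq_div_iff]
    · ring
    · exact mul_ne_zero (mul_ne_zero (mul_ne_zero (mul_ne_zero two_ne_zero hp') hsp')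
        (mul_ne_zero hps (by positivity))) (mul_ne_zero hqs (by positivity))
    · exact mul_ne_zero (mul_ne_zero (mul_ne_zero (mul_ne_zero hsp (by positivity)) hsq)
        (by positivity)) two_ne_zero
  rw [nuEven_mul_nuEven_eq_varphi, theta_two_mul s hp]
  linear_combination
    4 * (4 * n + 3) * theta s (2 * p - 1) * theta s (2 * q) * varphi s p q n * hcoeff

theorem nu_product_identity_general (s : ℝ) (hs : ∀ m : ℤ, 2 * s ≠ (m : ℝ))
    (i p q : ℕ) (hi : 0 < i) (hp : 0 < p) :
    nuOdd s i p * nuOdd s i (q + 1) + nuEven s i p * nuEven s i q =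
      2 * theta s (2 * p - 1) * theta s (2 * q) * phiT s p q (i - 1) := by
  obtain ⟨n, rfl⟩ := Nat.exists_eq_add_one_of_ne_zero hi.ne'
  have hs' (m : ℤ) : s ≠ m := fun h => hs (2 * m) (by push_cast [h]; ring)
  have hsp' : 2 * s - 2 * p + 1 ≠ 0 := fun h => hs (2 * p - 1) (by push_cast; linarith)
  rw [nuOdd_mul_nuOdd (mod_cast hs' p) (mod_cast hs' q) (mod_cast hs' (p + n)),
    nuEven_mul_nuEven hp.ne' (mod_cast hs' p) (mod_cast hs' q) hsp', Nat.add_sub_cancel, phiT]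
  ring

/-- Lemma 5.6: `ν_{2i-1,2p-1} ν_{2i-1,2q+1} + ν_{2i,2p} ν_{2i,2q} = 2 θ_{2p-1} θ_{2q} φ̃_{i-1}(s;p,q)`. -/
theorem nu_product_identity (s : ℝ) (hs : ∀ m : ℤ, 2 * s ≠ (m : ℝ))
    (i p q : ℕ) (hi : 0 < i) (hp : 0 < p) (hq : 0 < q) :
    nuOdd s i p * nuOdd s i (q + 1) + nuEven s i p * nuEven s i q =
      2 * theta s (2 * p - 1) * theta s (2 * q) * phiT s p q (i - 1) :=
  nu_product_identity_general s hs i p q hi hp
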